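/- Let 1 ≤ l < k ≤ n−1 and η ∈ Γ_{k+1}. Then for every index p one has σ_{k−1}(η|p) > 0, σ_l(η|p) > 0, σ_k(η|p) > 0, and the quantity α_p := (σ_k(η|p)/σ_{k−1}(η|p)) · (σ_{l−1}(η|p)/σ_l(η|p)) satisfies 0 < α_p ≤ l(n−k)/(k(n−l)) < 1. -/

import Mathlib

/-!
For a real multiset `s` of size `N` write `E_j = σ_j(s) / C(N, j)`. Newton's inequality
`E_m E_{m+2} ≤ E_{m+1}²` holds for every real `s`, by induction on `N`: by Rolle the derivative of
`∏ (X - a)` has `N - 1` real roots, whose means `E_0, …, E_{N-1}` are those of `s`; this settles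
`m + 2 < N`, the case `m + 2 = N` reduces to `m = 0` by passing to the reciprocals, and `N = 2` is
AM-GM.

Since `σ_j(η) = σ_j(η|p) + η_p σ_{j-1}(η|p)`, Newton's inequality for `η|p` shows inductively that
`σ_1(η), …, σ_{k+1}(η) > 0` forces `σ_0(η|p), …, σ_k(η|p) > 0`. Where the `E_j` are positive,
Newton's inequality says that `E_{j+1} / E_j` is non-increasing, and `E_k E_{l-1} ≤ E_{k-1} E_l`
for `η|p` is the bound on `α_p`, the constant being `C(n-1,k) C(n-1,l-1) / (C(n-1,k-1) C(n-1,l))`.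
-/

/-- The `m`-th elementary symmetric function of `x ∈ ℝⁿ`. -/
noncomputable def esym (n m : ℕ) (x : Fin n → ℝ) : ℝ :=
  ∑ s ∈ Finset.univ.powersetCard m, ∏ i ∈ s, x i

/-- `σ_m(x|p)`: the `m`-th elementary symmetric function of the vector obtained from `x`
by deleting the entry `x p`. -/
noncomputable def esymDel (n m : ℕ) (x : Fin n → ℝ) (p : Fin n) : ℝ :=
  ∑ s ∈ (Finset.univ.erase p).powersetCard m, ∏ i ∈ s, x i

/-- The Gårding cone `Γ_k ⊂ ℝⁿ`. -/
def GardingCone (n k : ℕ) : Set (Fin n → ℝ) :=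
  {x | ∀ i : ℕ, 1 ≤ i → i ≤ k → 0 < esym n i x}

open Polynomial

theorem Nat.choose_mul_choose_add_two_le_sq (N m : ℕ) :
    N.choose m * N.choose (m + 2) ≤ N.choose (m + 1) ^ 2 := by
  obtain hNm | ⟨r, rfl⟩ : N ≤ m ∨ ∃ r, N = m + 1 + r :=
    (le_or_gt N m).imp_right fun h => ⟨N - (m + 1), by omega⟩
  · simp [Nat.choose_eq_zero_of_lt (by omega : N < m + 2)]
  set a := (m + 1 + r).choose m
  set b := (m + 1 + r).choose (m + 1)
  set c := (m + 1 + r).choose (m + 2)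
  have h1 : b * (m + 1) = a * (r + 1) := by
    rw [Nat.choose_succ_right_eq, (by omega : m + 1 + r - m = r + 1)]
  have h2 : c * (m + 2) = b * r := by
    rw [Nat.choose_succ_right_eq, (by omega : m + 1 + r - (m + 1) = r)]
  refine Nat.le_of_mul_le_mul_right (c := (r + 1) * (m + 2)) ?_ (by positivity)
  calc a * c * ((r + 1) * (m + 2)) = (a * (r + 1)) * (c * (m + 2)) := by ring
    _ = b ^ 2 * ((m + 1) * r) := by rw [← h1, h2]; ring
    _ ≤ b ^ 2 * ((r + 1) * (m + 2)) := Nat.mul_le_mul_left _ (by nlinarith)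

theorem succ_mul_le_mul_succ_of_sq_le {f : ℕ → ℝ} {K : ℕ} (hpos : ∀ j ≤ K, 0 < f j)
    (hf : ∀ j, j + 2 ≤ K → f j * f (j + 2) ≤ f (j + 1) ^ 2) {i j : ℕ} (hij : i ≤ j)
    (hj : j + 1 ≤ K) : f (j + 1) * f i ≤ f j * f (i + 1) := by
  induction j, hij using Nat.le_induction with
  | base => rw [mul_comm]
  | succ j hij ih =>
    have ih := ih (by omega)
    have hi := (hpos i (by omega)).le
    have hj1 := (hpos (j + 1) (by omega)).le
    refine le_of_mul_le_mul_left ?_ (hpos j (by omega))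
    calc f j * (f (j + 2) * f i) = f i * (f j * f (j + 2)) := by ring
      _ ≤ f i * f (j + 1) ^ 2 := by gcongr; exact hf j hj
      _ = f (j + 1) * (f (j + 1) * f i) := by ring
      _ ≤ f (j + 1) * (f j * f (i + 1)) := by gcongr
      _ = f j * (f (j + 1) * f (i + 1)) := by ring

namespace Multiset

noncomputable def esymmMean (s : Multiset ℝ) (j : ℕ) : ℝ := s.esymm j / (card s).choose j

variable (s : Multiset ℝ)

theorem esymm_zero_right : s.esymm 0 = 1 := by
  simp [esymm]

theorem esymm_cons_succ (a : ℝ) (k : ℕ) :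
    (a ::ₘ s).esymm (k + 1) = s.esymm (k + 1) + a * s.esymm k := by
  simp only [esymm, powersetCard_cons, map_add, sum_add, map_map, Function.comp_def, prod_cons,
    ← sum_map_mul_left]

theorem esymm_eq_zero_of_card_lt {k : ℕ} (h : card s < k) : s.esymm k = 0 := by
  simp [esymm, powersetCard_eq_empty _ h]

theorem esymm_card : s.esymm (card s) = s.prod := by
  induction s using Multiset.induction with
  | empty => simp [esymm]
  | cons a s ih =>
    rw [card_cons, esymm_cons_succ, esymm_eq_zero_of_card_lt _ (Nat.lt_succ_self _), ih, prod_cons]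
    ring

theorem prod_mul_esymm_map_inv (h0 : (0 : ℝ) ∉ s) {i j : ℕ} (hij : i + j = card s) :
    s.prod * (s.map (·⁻¹)).esymm i = s.esymm j := by
  induction s using Multiset.induction generalizing i j with
  | empty =>
    obtain ⟨rfl, rfl⟩ : i = 0 ∧ j = 0 := by simpa using hij
    simp [esymm_zero_right]
  | cons a s ih =>
    have ha : a ≠ 0 := fun h => h0 (h ▸ mem_cons_self a s)
    have ih := @ih (fun h => h0 (mem_cons_of_mem h))
    rw [card_cons] at hij
    rcases i with _ | i
    · rw [esymm_zero_right, mul_one, ← esymm_card, card_cons, ← hij, zero_add]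
    rw [prod_cons, map_cons, esymm_cons_succ]
    have hinv : a * a⁻¹ = 1 := mul_inv_cancel₀ ha
    rcases j with _ | j
    · have h := ih (by omega : i + 0 = card s)
      rw [esymm_zero_right] at h ⊢
      rw [esymm_eq_zero_of_card_lt _ (by rw [card_map]; omega)]
      linear_combination h + s.prod * (s.map (·⁻¹)).esymm i * hinv
    · rw [esymm_cons_succ, ← ih (by omega : i + 1 + j = card s),
        ← ih (by omega : i + (j + 1) = card s)]
      linear_combination s.prod * (s.map (·⁻¹)).esymm i * hinv

theorem card_roots_derivative_prod_X_sub_C :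
    card (derivative (s.map fun a => X - C a).prod).roots = card s - 1 := by
  set P := (s.map fun a => X - C a).prod
  have hle := card_roots' (derivative P)
  have hge := card_roots_le_derivative P
  rw [natDegree_derivative, natDegree_multiset_prod_X_sub_C_eq_card] at hle
  rw [roots_multiset_prod_X_sub_C] at hge
  omega

theorem card_mul_esymm_roots_derivative_prod_X_sub_C {j : ℕ} (hj : j < card s) :
    (card s : ℝ) * (derivative (s.map fun a => X - C a).prod).roots.esymm j
      = ((card s : ℝ) - j) * s.esymm j := by
  set P := (s.map fun a => X - C a).prod
  set N := card s
  have hdeg : (derivative P).natDegree = N - 1 := by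
    rw [natDegree_derivative, natDegree_multiset_prod_X_sub_C_eq_card]
  have hlead : (derivative P).leadingCoeff = N := by
    rw [leadingCoeff_derivative, natDegree_multiset_prod_X_sub_C_eq_card,
      (monic_multiset_prod_of_monic _ _ fun a _ => monic_X_sub_C a).leadingCoeff, one_mul]
  have hcoeff : (derivative P).coeff (N - 1 - j) = (-1) ^ j * s.esymm j * ((N : ℝ) - j) := by
    rw [coeff_derivative, (by omega : N - 1 - j + 1 = N - j),
      prod_X_sub_C_coeff s (Nat.sub_le _ _), Nat.sub_sub_self hj.le]
    push_cast [Nat.cast_sub (by omega : j ≤ N - 1), Nat.cast_sub (by omega : 1 ≤ N)]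
    ring
  have hvieta := coeff_eq_esymm_roots_of_card
    ((card_roots_derivative_prod_X_sub_C s).trans hdeg.symm) (k := N - 1 - j) (by rw [hdeg]; omega)
  rw [hcoeff, hlead, hdeg, Nat.sub_sub_self (by omega), mul_comm (N : ℝ), mul_assoc,
    mul_assoc] at hvieta
  have hsign : (-1 : ℝ) ^ j ≠ 0 := pow_ne_zero j (by norm_num)
  linear_combination (mul_left_cancel₀ hsign hvieta).symm

theorem esymmMean_roots_derivative_prod_X_sub_C {j : ℕ} (hj : j < card s) :
    (derivative (s.map fun a => X - C a).prod).roots.esymmMean j = s.esymmMean j := by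
  set N := card s
  have hchoose : ((N - 1).choose j : ℝ) * N = N.choose j * ((N : ℝ) - j) := by
    have h := Nat.choose_mul_succ_eq (N - 1) j
    rw [Nat.sub_add_cancel (by omega : 1 ≤ N)] at h
    rw [← Nat.cast_sub hj.le]
    exact_mod_cast h
  have hN : (N : ℝ) ≠ 0 := by exact_mod_cast (by omega : N ≠ 0)
  rw [esymmMean, esymmMean, card_roots_derivative_prod_X_sub_C,
    div_eq_div_iff (by exact_mod_cast (Nat.choose_pos (by omega)).ne')
      (by exact_mod_cast (Nat.choose_pos hj.le).ne')]
  apply mul_left_cancel₀ hN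
  linear_combination (N.choose j : ℝ) * card_mul_esymm_roots_derivative_prod_X_sub_C s hj
    - s.esymm j * hchoose

theorem esymmMean_zero_right : s.esymmMean 0 = 1 := by
  simp [esymmMean, esymm_zero_right]

theorem esymmMean_card : s.esymmMean (card s) = s.prod := by
  simp [esymmMean, esymm_card]

theorem esymmMean_map_inv (h0 : (0 : ℝ) ∉ s) {j : ℕ} (hj : j ≤ card s) :
    (s.map (·⁻¹)).esymmMean j = s.esymmMean (card s - j) / s.prod := by
  have hP : s.prod ≠ 0 := prod_ne_zero h0
  rw [esymmMean, esymmMean, card_map, Nat.choose_symm hj,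
    ← prod_mul_esymm_map_inv s h0 (Nat.add_sub_of_le hj)]
  field_simp

theorem esymmMean_mul_esymmMean_le_sq {m : ℕ} (hm : m + 2 ≤ card s) :
    s.esymmMean m * s.esymmMean (m + 2) ≤ s.esymmMean (m + 1) ^ 2 := by
  obtain ⟨N, hN⟩ : ∃ N, card s = N := ⟨_, rfl⟩
  induction N using Nat.strong_induction_on generalizing s m with
  | _ N ih =>
  have below : ∀ t : Multiset ℝ, card t = N → ∀ k, k + 2 < N →
      t.esymmMean k * t.esymmMean (k + 2) ≤ t.esymmMean (k + 1) ^ 2 := by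
    intro t ht k hk
    have hcard := card_roots_derivative_prod_X_sub_C t
    have h := ih (N - 1) (by omega) (derivative (t.map fun a => X - C a).prod).roots
      (by omega : k + 2 ≤ _) (by omega)
    simpa only [esymmMean_roots_derivative_prod_X_sub_C t (by omega : k < card t),
      esymmMean_roots_derivative_prod_X_sub_C t (by omega : k + 1 < card t),
      esymmMean_roots_derivative_prod_X_sub_C t (by omega : k + 2 < card t)] using h
  rw [hN] at hm
  obtain hlt | rfl := hm.lt_or_eq
  · exact below s hN m hlt
  obtain rfl | hm0 := Nat.eq_zero_or_pos m
  · obtain ⟨x, y, rfl⟩ := card_eq_two.mp hN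
    rw [esymmMean_zero_right, one_mul, esymmMean, esymmMean, hN, insert_eq_cons, esymm_pair_one,
      esymm_pair_two]
    norm_num
    nlinarith [sq_nonneg (x - y)]
  by_cases h0 : (0 : ℝ) ∈ s
  · rw [← hN, esymmMean_card, prod_eq_zero h0, mul_zero]
    positivity
  have hz := below (s.map (·⁻¹)) (by rw [card_map, hN]) 0 (by omega)
  rw [esymmMean_zero_right, one_mul, esymmMean_map_inv s h0 (by omega),
    esymmMean_map_inv s h0 (by omega), hN, (by omega : m + 2 - 2 = m),
    (by omega : m + 2 - (0 + 1) = m + 1)] at hz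
  have hP : s.prod ≠ 0 := prod_ne_zero h0
  rw [← hN, esymmMean_card]
  calc s.esymmMean m * s.prod = s.prod ^ 2 * (s.esymmMean m / s.prod) := by field_simp
    _ ≤ s.prod ^ 2 * (s.esymmMean (m + 1) / s.prod) ^ 2 := by gcongr
    _ = s.esymmMean (m + 1) ^ 2 := by field_simp

theorem esymm_mul_esymm_le_sq (m : ℕ) : s.esymm m * s.esymm (m + 2) ≤ s.esymm (m + 1) ^ 2 := by
  obtain hlt | hm := lt_or_ge (card s) (m + 2)
  · rw [esymm_eq_zero_of_card_lt s hlt, mul_zero]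
    positivity
  have hchoose : ∀ j ≤ card s, (0 : ℝ) < (card s).choose j := fun j hj => by
    exact_mod_cast Nat.choose_pos hj
  have hlc :
      ((card s).choose m * (card s).choose (m + 2) : ℝ) ≤ (card s).choose (m + 1) ^ 2 := by
    exact_mod_cast Nat.choose_mul_choose_add_two_le_sq _ _
  have h := esymmMean_mul_esymmMean_le_sq s hm
  rw [esymmMean, esymmMean, esymmMean, div_mul_div_comm, div_pow,
    div_le_div_iff₀ (mul_pos (hchoose _ (by omega)) (hchoose _ hm))
      (pow_pos (hchoose _ (by omega)) 2)] at h
  refine le_of_mul_le_mul_right ?_ (pow_pos (hchoose (m + 1) (by omega)) 2)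
  calc s.esymm m * s.esymm (m + 2) * (card s).choose (m + 1) ^ 2
      ≤ s.esymm (m + 1) ^ 2 * ((card s).choose m * (card s).choose (m + 2)) := h
    _ ≤ s.esymm (m + 1) ^ 2 * (card s).choose (m + 1) ^ 2 := by gcongr

theorem esymm_pos_of_cons {a : ℝ} {m : ℕ} (h : ∀ j ≤ m + 1, 0 < (a ::ₘ s).esymm j) :
    ∀ j ≤ m, 0 < s.esymm j := by
  induction m with
  | zero =>
    intro j hj
    rw [Nat.le_zero.mp hj, esymm_zero_right]
    exact one_pos
  | succ m ih =>
    have ih := ih fun j hj => h j (by omega)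
    intro j hj
    obtain hj | rfl := hj.lt_or_eq
    · exact ih j (by omega)
    have hm := ih m le_rfl
    have h1 := h (m + 1) (by omega)
    have h2 := h (m + 2) (by omega)
    rw [esymm_cons_succ] at h1 h2
    by_contra! hneg
    nlinarith [mul_pos hm h2, mul_nonneg (neg_nonneg.2 hneg) h1.le, esymm_mul_esymm_le_sq s m]

theorem esymm_succ_mul_esymm_le {i j : ℕ} (hpos : ∀ m ≤ j + 1, 0 < s.esymm m) (hij : i ≤ j)
    (hj : j + 1 ≤ card s) :
    ((j : ℝ) + 1) * ((card s : ℝ) - i) * (s.esymm (j + 1) * s.esymm i)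
      ≤ ((i : ℝ) + 1) * ((card s : ℝ) - j) * (s.esymm j * s.esymm (i + 1)) := by
  set N := card s
  have hchoose : ∀ m ≤ N, (0 : ℝ) < N.choose m := fun m hm => by
    exact_mod_cast Nat.choose_pos hm
  have hstep : ∀ m < N, (N.choose (m + 1) : ℝ) * (m + 1) = N.choose m * ((N : ℝ) - m) :=
    fun m hm => by
      rw [← Nat.cast_sub hm.le]
      exact_mod_cast Nat.choose_succ_right_eq N m
  have h := succ_mul_le_mul_succ_of_sq_le (f := s.esymmMean) (K := j + 1)
    (fun m hm => div_pos (hpos m hm) (hchoose m (by omega)))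
    (fun m hm => esymmMean_mul_esymmMean_le_sq s (by omega)) hij le_rfl
  rw [esymmMean, esymmMean, esymmMean, esymmMean, div_mul_div_comm, div_mul_div_comm,
    div_le_div_iff₀ (mul_pos (hchoose _ hj) (hchoose _ (by omega)))
      (mul_pos (hchoose _ (by omega)) (hchoose _ (by omega)))] at h
  have key := mul_le_mul_of_nonneg_right h
    (by positivity : (0 : ℝ) ≤ ((i : ℝ) + 1) * ((j : ℝ) + 1))
  refine le_of_mul_le_mul_left ?_ (mul_pos (hchoose i (by omega)) (hchoose j (by omega)))
  linear_combination key
    - s.esymm (j + 1) * s.esymm i * N.choose j * ((j : ℝ) + 1) * hstep i (by omega)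
    + s.esymm j * s.esymm (i + 1) * N.choose i * ((i : ℝ) + 1) * hstep j (by omega)

end Multiset

theorem esymDel_eq_esymm (n m : ℕ) (x : Fin n → ℝ) (p : Fin n) :
    esymDel n m x p = ((Finset.univ.erase p).val.map x).esymm m :=
  (Finset.esymm_map_val x _ m).symm

theorem esym_eq_esymm_cons (n m : ℕ) (x : Fin n → ℝ) (p : Fin n) :
    esym n m x = (x p ::ₘ (Finset.univ.erase p).val.map x).esymm m := by
  rw [Finset.erase_val, ← Multiset.map_cons, Multiset.cons_erase (Finset.mem_univ p)]
  exact (Finset.esymm_map_val x _ m).symm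

theorem esymDel_pos_of_mem_gardingCone {n k : ℕ} {x : Fin n → ℝ}
    (hx : x ∈ GardingCone n (k + 1)) (p : Fin n) {j : ℕ} (hj : j ≤ k) : 0 < esymDel n j x p := by
  rw [esymDel_eq_esymm]
  refine Multiset.esymm_pos_of_cons _ (a := x p) (fun m hm => ?_) j hj
  obtain rfl | hm0 := Nat.eq_zero_or_pos m
  · rw [Multiset.esymm_zero_right]
    exact one_pos
  · rw [← esym_eq_esymm_cons]
    exact hx m hm0 hm

theorem stmt_7 (n k l : ℕ) (hl1 : 1 ≤ l) (hlk : l < k) (hkn : k ≤ n - 1)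
    (η : Fin n → ℝ) (hη : η ∈ GardingCone n (k + 1)) (p : Fin n) :
    0 < esymDel n (k - 1) η p ∧ 0 < esymDel n l η p ∧ 0 < esymDel n k η p ∧
    0 < (esymDel n k η p / esymDel n (k - 1) η p) *
        (esymDel n (l - 1) η p / esymDel n l η p) ∧
    (esymDel n k η p / esymDel n (k - 1) η p) *
        (esymDel n (l - 1) η p / esymDel n l η p)
      ≤ (l : ℝ) * ((n : ℝ) - (k : ℝ)) / ((k : ℝ) * ((n : ℝ) - (l : ℝ))) ∧
    (l : ℝ) * ((n : ℝ) - (k : ℝ)) / ((k : ℝ) * ((n : ℝ) - (l : ℝ))) < 1 := by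
  obtain ⟨i, rfl⟩ : ∃ i, l = i + 1 := ⟨l - 1, by omega⟩
  obtain ⟨j, rfl⟩ : ∃ j, k = j + 1 := ⟨k - 1, by omega⟩
  have hpos : ∀ m ≤ j + 1, 0 < esymDel n m η p := fun m hm =>
    esymDel_pos_of_mem_gardingCone hη p hm
  simp only [esymDel_eq_esymm, Nat.add_sub_cancel] at hpos ⊢
  set μ := (Finset.univ.erase p).val.map η
  have hcard : Multiset.card μ = n - 1 := by simp [μ]
  have hratio := μ.esymm_succ_mul_esymm_le hpos (by omega : i ≤ j) (by omega)
  rw [hcard, Nat.cast_sub (by omega : 1 ≤ n), Nat.cast_one] at hratio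
  have hn : (j : ℝ) + 2 ≤ n := by exact_mod_cast (by omega : j + 2 ≤ n)
  have hij : (i : ℝ) < j := by exact_mod_cast (by omega : i < j)
  have hden : (0 : ℝ) < ((j + 1 : ℕ) : ℝ) * ((n : ℝ) - ((i + 1 : ℕ) : ℝ)) := by
    push_cast
    exact mul_pos (by positivity) (by linarith)
  refine ⟨hpos j (by omega), hpos (i + 1) (by omega), hpos (j + 1) le_rfl,
    mul_pos (div_pos (hpos _ le_rfl) (hpos _ (by omega)))
      (div_pos (hpos _ (by omega)) (hpos _ (by omega))), ?_, ?_⟩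
  · rw [div_mul_div_comm, div_le_div_iff₀ (mul_pos (hpos _ (by omega)) (hpos _ (by omega))) hden]
    push_cast
    linear_combination hratio
  · rw [div_lt_one hden]
    push_cast
    nlinarith
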